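/- (Lemma 3.5, first identity, eq. (3.7)) Assume the LC condition. For every z ∈ ℂ and every x ≥ 0: φ_z(x) − z·(𝓡(0)φ_z)(x) = (1 − z·∫₀^∞ φ_z(y)θ₀(y)dy)·φ₀(x). -/

import Mathlib

open MeasureTheory Set Filter

noncomputable section

namespace SLLC

/-- Lebesgue measure restricted to `(0,∞)`. -/
def mu : Measure ℝ := volume.restrict (Ioi 0)

/-- Inner product `⟨f,g⟩ = ∫₀^∞ f(x)·conj(g(x)) dx`, linear in the first argument. -/
def ip (f g : ℝ → ℂ) : ℂ := ∫ x in Ioi (0 : ℝ), f x * (starRingEnd ℂ) (g x)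

/-- The classical differential expression `𝒜u = -(p u')' + q u = -(p' u' + p u'') + q u`,
written in terms of chosen first and second derivatives `u'`, `u''` of `u`. -/
def opA (p p' q : ℝ → ℝ) (u' u'' u : ℝ → ℂ) : ℝ → ℂ :=
  fun x => -((p' x : ℂ) * u' x + (p x : ℂ) * u'' x) + (q x : ℂ) * u x

/-- The a.e.-defined differential expression `𝒜u = -(p u')' + q u`, written in terms of a
locally integrable function `g` representing `(p u')'`. -/
def aeA (q : ℝ → ℝ) (u g : ℝ → ℂ) : ℝ → ℂ := fun x => -g x + (q x : ℂ) * u x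

/-- The standing hypotheses: `p` is continuously differentiable on `[0,∞)` (with derivative `p'`)
and positive, `q` is continuous on `[0,∞)`, and for every `z ∈ ℂ` the functions `φ z`, `θ z`
are C² solutions of `-(p u')' + q u = z u` on `[0,∞)` (with first derivatives `φ' z`, `θ' z`)
with initial conditions `φ z 0 = 1`, `(φ z)' 0 = α`, `θ z 0 = 0`, `(θ z)' 0 = -1/p 0`.
The limit circle (LC) assumption is `φ z ∈ L²` and `θ z ∈ L²` for every `z`. -/
structure Setting (p p' q : ℝ → ℝ) (α : ℝ) (φ φD θ θD : ℂ → ℝ → ℂ) : Prop where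
  p_pos : ∀ x ∈ Ici (0 : ℝ), 0 < p x
  p_deriv : ∀ x ∈ Ici (0 : ℝ), HasDerivWithinAt p (p' x) (Ici 0) x
  p'_cont : ContinuousOn p' (Ici 0)
  q_cont : ContinuousOn q (Ici 0)
  φ_deriv : ∀ z : ℂ, ∀ x ∈ Ici (0 : ℝ), HasDerivWithinAt (φ z) (φD z x) (Ici 0) x
  φ_ode : ∀ z : ℂ, ∀ x ∈ Ici (0 : ℝ),
    HasDerivWithinAt (fun y => (p y : ℂ) * φD z y) (((q x : ℂ) - z) * φ z x) (Ici 0) x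
  θ_deriv : ∀ z : ℂ, ∀ x ∈ Ici (0 : ℝ), HasDerivWithinAt (θ z) (θD z x) (Ici 0) x
  θ_ode : ∀ z : ℂ, ∀ x ∈ Ici (0 : ℝ),
    HasDerivWithinAt (fun y => (p y : ℂ) * θD z y) (((q x : ℂ) - z) * θ z x) (Ici 0) x
  φ_init : ∀ z : ℂ, φ z 0 = 1
  φ_init' : ∀ z : ℂ, φD z 0 = (α : ℂ)
  θ_init : ∀ z : ℂ, θ z 0 = 0
  θ_init' : ∀ z : ℂ, θD z 0 = -((p 0 : ℂ))⁻¹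
  lc_φ : ∀ z : ℂ, MemLp (φ z) 2 mu
  lc_θ : ∀ z : ℂ, MemLp (θ z) 2 mu

/-- A smooth cut-off `ω` vanishing near `0` and equal to `1` near `∞`. -/
def Cutoff (ω : ℝ → ℝ) : Prop :=
  ContDiff ℝ (⊤ : ℕ∞) ω ∧ (∃ ε > (0 : ℝ), ∀ x < ε, ω x = 0) ∧ (∃ R : ℝ, ∀ x ≥ R, ω x = 1)

/-- `u ∈ D(A_00)`: `u` is C² on `[0,∞)` (with derivatives `u'`, `u''`), vanishes for large `x`
and satisfies the boundary condition `u'(0) = α·u(0)`. -/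
def InA00 (α : ℝ) (u u' u'' : ℝ → ℂ) : Prop :=
  (∀ x ∈ Ici (0 : ℝ), HasDerivWithinAt u (u' x) (Ici 0) x) ∧
  (∀ x ∈ Ici (0 : ℝ), HasDerivWithinAt u' (u'' x) (Ici 0) x) ∧
  ContinuousOn u'' (Ici 0) ∧
  (∃ R : ℝ, ∀ x ≥ R, u x = 0) ∧
  u' 0 = (α : ℂ) * u 0

/-- `u ∈ D(A_min)`: `u ∈ L²` and there are `u_k ∈ D(A_00)` and `w ∈ L²` with `u_k → u` and
`𝒜u_k → w` in `L²`. -/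
def InMinDom (p p' q : ℝ → ℝ) (α : ℝ) (u : ℝ → ℂ) : Prop :=
  MemLp u 2 mu ∧
  ∃ (U U' U'' : ℕ → ℝ → ℂ) (w : ℝ → ℂ), MemLp w 2 mu ∧
    (∀ k, InA00 α (U k) (U' k) (U'' k)) ∧
    Tendsto (fun k => eLpNorm (fun x => U k x - u x) 2 mu) atTop (nhds 0) ∧
    Tendsto (fun k => eLpNorm (fun x => opA p p' q (U' k) (U'' k) (U k) x - w x) 2 mu)
      atTop (nhds 0)

/-- `u ∈ D(A_max)`, with explicit witnesses: `u ∈ L²`, `u` is continuously differentiable on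
`[0,∞)` with derivative `u'`, the boundary condition `u'(0) = α·u(0)` holds, `p·u'` is locally
absolutely continuous on `[0,∞)` with a.e. derivative `g` (i.e. `(p u')(x) = (p u')(0) + ∫₀ˣ g`
with `g` locally integrable), and the a.e.-defined function `𝒜u = -g + q·u` belongs to `L²`. -/
def InMaxDomW (p q : ℝ → ℝ) (α : ℝ) (u u' g : ℝ → ℂ) : Prop :=
  MemLp u 2 mu ∧
  (∀ x ∈ Ici (0 : ℝ), HasDerivWithinAt u (u' x) (Ici 0) x) ∧
  ContinuousOn u' (Ici 0) ∧
  u' 0 = (α : ℂ) * u 0 ∧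
  (∀ r : ℝ, IntegrableOn g (Icc 0 r)) ∧
  (∀ x ∈ Ici (0 : ℝ), (p x : ℂ) * u' x = (p 0 : ℂ) * u' 0 + ∫ y in (0 : ℝ)..x, g y) ∧
  MemLp (aeA q u g) 2 mu

/-- `u ∈ D(A_max)`. -/
def InMaxDom (p q : ℝ → ℝ) (α : ℝ) (u : ℝ → ℂ) : Prop :=
  ∃ u' g, InMaxDomW p q α u u' g

/-- The generating function of the self-adjoint extension `A_t`: `t·φ₀ + θ̃₀` for `t ∈ ℝ`
(`t = some t`), and `φ₀` for `t = ∞` (`t = none`). -/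
def genFun (φ θ : ℂ → ℝ → ℂ) (ω : ℝ → ℝ) : Option ℝ → ℝ → ℂ
  | some t => fun x => (t : ℂ) * φ 0 x + (ω x : ℂ) * θ 0 x
  | none => fun x => φ 0 x

/-- `u ∈ D(A_t)` (as an element of `L²`, i.e., up to a.e. equality):
`u = u₀ + c·(t·φ₀ + θ̃₀)` for `t ∈ ℝ`, resp. `u = u₀ + c·φ₀` for `t = ∞`,
with `u₀ ∈ D(A_min)` and `c ∈ ℂ`. -/
def InDom (p p' q : ℝ → ℝ) (α : ℝ) (φ θ : ℂ → ℝ → ℂ) (ω : ℝ → ℝ) (t : Option ℝ)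
    (u : ℝ → ℂ) : Prop :=
  ∃ (u₀ : ℝ → ℂ) (c : ℂ), InMinDom p p' q α u₀ ∧
    ∀ᵐ x ∂mu, u x = u₀ x + c * genFun φ θ ω t x

/-- The quasiresolvent `(𝓡(z)h)(x) = θ_z(x)·∫₀ˣ φ_z h + φ_z(x)·∫ₓ^∞ θ_z h`. -/
def quasiRes (φ θ : ℂ → ℝ → ℂ) (z : ℂ) (h : ℝ → ℂ) : ℝ → ℂ :=
  fun x => θ z x * (∫ y in (0 : ℝ)..x, φ z y * h y) + φ z x * (∫ y in Ioi x, θ z y * h y)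


private lemma ftc_aux (f : ℝ → ℂ) (hf : ContinuousOn f (Ici 0)) {b : ℝ} (hb : 0 ≤ b) :
    HasDerivWithinAt (fun u => ∫ y in (0:ℝ)..u, f y) (f b) (Ici 0) b := by
  have hint : IntervalIntegrable f volume 0 b := by
    apply (hf.mono (by rw [uIcc_of_le hb]; exact Icc_subset_Ici_self)).intervalIntegrable
  have haesm : AEStronglyMeasurable f (volume.restrict (Ici 0)) :=
    hf.aestronglyMeasurable measurableSet_Ici
  rcases eq_or_lt_of_le hb with h0 | h0
  · subst h0
    have hmeas : StronglyMeasurableAtFilter f (nhdsWithin (0:ℝ) (Ioi 0)) volume :=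
      ⟨Ici 0, mem_of_superset self_mem_nhdsWithin Ioi_subset_Ici_self, haesm⟩
    exact intervalIntegral.integral_hasDerivWithinAt_right hint hmeas
      ((hf 0 (by simp)).mono Ioi_subset_Ici_self)
  · have hmem : Ici (0:ℝ) ∈ nhds b := Ici_mem_nhds h0
    have hmeas : StronglyMeasurableAtFilter f (nhds b) volume := ⟨Ici 0, hmem, haesm⟩
    exact (intervalIntegral.integral_hasDerivAt_right hint hmeas
      (hf.continuousAt hmem)).hasDerivWithinAt

private lemma const_aux (f : ℝ → ℂ)
    (hf : ∀ t ∈ Ici (0:ℝ), HasDerivWithinAt f 0 (Ici 0) t) {t : ℝ} (ht : 0 ≤ t) :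
    f t = f 0 := by
  have hcont : ContinuousOn f (Icc 0 t) :=
    fun s hs => ((hf s hs.1).continuousWithinAt).mono Icc_subset_Ici_self
  exact constant_of_has_deriv_right_zero hcont
    (fun s hs => (hf s hs.1).mono (Ici_subset_Ici.2 hs.1)) t (right_mem_Icc.2 ht)

private def GG (φ : ℂ → ℝ → ℂ) (z : ℂ) : ℝ → ℂ := fun t => ∫ y in (0:ℝ)..t, φ 0 y * φ z y

private def KK (φ θ : ℂ → ℝ → ℂ) (z : ℂ) : ℝ → ℂ := fun t => ∫ y in (0:ℝ)..t, θ 0 y * φ z y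

private def II (φ θ : ℂ → ℝ → ℂ) (z : ℂ) : ℂ := ∫ y in Ioi (0:ℝ), θ 0 y * φ z y

private def DD (φ θ : ℂ → ℝ → ℂ) (z : ℂ) : ℝ → ℂ :=
  fun t => φ z t - φ 0 t - z * (θ 0 t * GG φ z t) + z * (φ 0 t * KK φ θ z t)

private def WW (p : ℝ → ℝ) (φD θD φ θ : ℂ → ℝ → ℂ) (z : ℂ) : ℝ → ℂ :=
  fun t => (p t : ℂ) * φD z t - (p t : ℂ) * φD 0 t - z * ((p t : ℂ) * θD 0 t * GG φ z t)
    + z * ((p t : ℂ) * φD 0 t * KK φ θ z t)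


/-- Lemma 3.5, eq. (3.7). Assume the LC condition. For every `z ∈ ℂ` and
`x ≥ 0`: `φ_z(x) − z·(𝓡(0)φ_z)(x) = (1 − z·∫₀^∞ φ_z θ₀)·φ₀(x)`. -/
theorem stmt_10 (p p' q : ℝ → ℝ) (α : ℝ) (φ φD θ θD : ℂ → ℝ → ℂ)
    (hS : Setting p p' q α φ φD θ θD)
    (z : ℂ) (x : ℝ) (hx : 0 ≤ x) :
    φ z x - z * quasiRes φ θ 0 (φ z) x
      = (1 - z * ∫ y in Ioi (0 : ℝ), φ z y * θ 0 y) * φ 0 x := by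
  have hφc : ∀ w : ℂ, ContinuousOn (φ w) (Ici 0) :=
    fun w t ht => (hS.φ_deriv w t ht).continuousWithinAt
  have hθc : ∀ w : ℂ, ContinuousOn (θ w) (Ici 0) :=
    fun w t ht => (hS.θ_deriv w t ht).continuousWithinAt
  have hpc : ContinuousOn p (Ici 0) := fun t ht => (hS.p_deriv t ht).continuousWithinAt
  have hpne : ∀ t ∈ Ici (0:ℝ), ((p t : ℂ)) ≠ 0 := fun t ht => by
    exact_mod_cast ne_of_gt (hS.p_pos t ht)
  -- FTC derivatives
  have hG : ∀ t ∈ Ici (0:ℝ), HasDerivWithinAt (GG φ z) (φ 0 t * φ z t) (Ici 0) t :=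
    fun t ht => ftc_aux _ ((hφc 0).mul (hφc z)) ht
  have hK : ∀ t ∈ Ici (0:ℝ), HasDerivWithinAt (KK φ θ z) (θ 0 t * φ z t) (Ici 0) t :=
    fun t ht => ftc_aux _ ((hθc 0).mul (hφc z)) ht
  -- integrability of θ₀ φ_z on (0,∞)
  have hInt : IntegrableOn (fun y => θ 0 y * φ z y) (Ioi 0) volume := by
    have h1 : MemLp (θ 0 • φ z) 1 mu :=
      MemLp.smul (hS.lc_φ z) (hS.lc_θ 0)
    exact memLp_one_iff_integrable.mp h1
  -- tail splitting
  have hTail : (∫ y in Ioi x, θ 0 y * φ z y) = II φ θ z - KK φ θ z x := by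
    have e1 : KK φ θ z x = ∫ y in Ioc 0 x, θ 0 y * φ z y := intervalIntegral.integral_of_le hx
    have e2 : II φ θ z = KK φ θ z x + ∫ y in Ioi x, θ 0 y * φ z y := by
      rw [e1, II, ← Ioc_union_Ioi_eq_Ioi hx,
        setIntegral_union (Ioc_disjoint_Ioi le_rfl) measurableSet_Ioi
          (hInt.mono_set Ioc_subset_Ioi_self) (hInt.mono_set (Ioi_subset_Ioi hx))]
    rw [e2]; ring
  -- Wronskian identity
  have hWr : ∀ t ∈ Ici (0:ℝ),
      (p t : ℂ) * θD 0 t * φ 0 t - (p t : ℂ) * φD 0 t * θ 0 t = -1 := by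
    intro t ht
    have hder : ∀ s ∈ Ici (0:ℝ), HasDerivWithinAt
        (fun y => (p y : ℂ) * θD 0 y * φ 0 y - (p y : ℂ) * φD 0 y * θ 0 y) 0 (Ici 0) s := by
      intro s hs
      have h := ((hS.θ_ode 0 s hs).mul (hS.φ_deriv 0 s hs)).sub
        ((hS.φ_ode 0 s hs).mul (hS.θ_deriv 0 s hs))
      have e : ((q s : ℂ) - 0) * θ 0 s * φ 0 s + (p s : ℂ) * θD 0 s * φD 0 s
          - (((q s : ℂ) - 0) * φ 0 s * θ 0 s + (p s : ℂ) * φD 0 s * θD 0 s) = 0 := by ring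
      rw [e] at h
      exact h
    have h := const_aux _ hder ht
    simp only [hS.θ_init' 0, hS.φ_init 0, hS.θ_init 0] at h
    rw [h]
    rw [mul_one, mul_zero, sub_zero, mul_neg, mul_inv_cancel₀ (hpne 0 self_mem_Ici)]
  -- derivative of DD
  have hD' : ∀ t ∈ Ici (0:ℝ), HasDerivWithinAt (DD φ θ z)
      ((p t : ℂ)⁻¹ * WW p φD θD φ θ z t) (Ici 0) t := by
    intro t ht
    have h := (((hS.φ_deriv z t ht).sub (hS.φ_deriv 0 t ht)).sub
        (((hS.θ_deriv 0 t ht).mul (hG t ht)).const_mul z)).add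
        (((hS.φ_deriv 0 t ht).mul (hK t ht)).const_mul z)
    have e : (p t : ℂ)⁻¹ * WW p φD θD φ θ z t
        = φD z t - φD 0 t - z * (θD 0 t * GG φ z t + θ 0 t * (φ 0 t * φ z t))
          + z * (φD 0 t * KK φ θ z t + φ 0 t * (θ 0 t * φ z t)) := by
      have hp := hpne t ht
      simp only [WW]
      field_simp
      ring
    rw [e]
    exact h
  -- derivative of WW
  have hW' : ∀ t ∈ Ici (0:ℝ), HasDerivWithinAt (WW p φD θD φ θ z)
      ((q t : ℂ) * DD φ θ z t) (Ici 0) t := by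
    intro t ht
    have h := (((hS.φ_ode z t ht).sub (hS.φ_ode 0 t ht)).sub
        (((hS.θ_ode 0 t ht).mul (hG t ht)).const_mul z)).add
        (((hS.φ_ode 0 t ht).mul (hK t ht)).const_mul z)
    have e : (q t : ℂ) * DD φ θ z t
        = ((q t : ℂ) - z) * φ z t - ((q t : ℂ) - 0) * φ 0 t
          - z * (((q t : ℂ) - 0) * θ 0 t * GG φ z t + (p t : ℂ) * θD 0 t * (φ 0 t * φ z t))
          + z * (((q t : ℂ) - 0) * φ 0 t * KK φ θ z t
            + (p t : ℂ) * φD 0 t * (θ 0 t * φ z t)) := by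
      simp only [DD]
      linear_combination (z * φ z t) * hWr t ht
    rw [e]
    exact h
  have hDc : ContinuousOn (DD φ θ z) (Ici 0) := fun t ht => (hD' t ht).continuousWithinAt
  have hWc : ContinuousOn (WW p φD θD φ θ z) (Ici 0) :=
    fun t ht => (hW' t ht).continuousWithinAt
  -- bounds on [0, x]
  obtain ⟨C1, hC1⟩ := (isCompact_Icc : IsCompact (Icc (0:ℝ) x)).exists_bound_of_continuousOn
    (f := fun t => ((p t : ℂ))⁻¹)
    ((Complex.continuous_ofReal.comp_continuousOn (hpc.mono Icc_subset_Ici_self)).inv₀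
      (fun t ht => hpne t ht.1))
  obtain ⟨C2, hC2⟩ := (isCompact_Icc : IsCompact (Icc (0:ℝ) x)).exists_bound_of_continuousOn
    (f := fun t => ((q t : ℂ)))
    (Complex.continuous_ofReal.comp_continuousOn (hS.q_cont.mono Icc_subset_Ici_self))
  have hM0 : 0 ≤ max C1 C2 :=
    le_trans (norm_nonneg _) ((hC1 0 (left_mem_Icc.2 hx)).trans (le_max_left _ _))
  -- Gronwall
  have hγ' : ∀ t ∈ Ico (0:ℝ) x, HasDerivWithinAt
      (fun s => ((DD φ θ z s, WW p φD θD φ θ z s) : ℂ × ℂ))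
      (((p t : ℂ)⁻¹ * WW p φD θD φ θ z t, (q t : ℂ) * DD φ θ z t) : ℂ × ℂ) (Ici t) t :=
    fun t ht => ((hD' t ht.1).mono (Ici_subset_Ici.2 ht.1)).prodMk
      ((hW' t ht.1).mono (Ici_subset_Ici.2 ht.1))
  have hγc : ContinuousOn (fun s => ((DD φ θ z s, WW p φD θD φ θ z s) : ℂ × ℂ)) (Icc 0 x) :=
    (hDc.mono Icc_subset_Ici_self).prodMk (hWc.mono Icc_subset_Ici_self)
  have hD0 : DD φ θ z 0 = 0 := by
    simp [DD, GG, KK, hS.φ_init, hS.θ_init]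
  have hW0 : WW p φD θD φ θ z 0 = 0 := by
    simp [WW, GG, KK, hS.φ_init']
  have hγ0 : ‖((DD φ θ z 0, WW p φD θD φ θ z 0) : ℂ × ℂ)‖ ≤ 0 := by
    simp [hD0, hW0, Prod.norm_def]
  have hbound : ∀ t ∈ Ico (0:ℝ) x,
      ‖(((p t : ℂ)⁻¹ * WW p φD θD φ θ z t, (q t : ℂ) * DD φ θ z t) : ℂ × ℂ)‖
        ≤ (max C1 C2) * ‖((DD φ θ z t, WW p φD θD φ θ z t) : ℂ × ℂ)‖ + 0 := by
    intro t ht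
    rw [add_zero, Prod.norm_def, Prod.norm_def]
    simp only
    apply max_le
    · rw [norm_mul]
      calc ‖((p t : ℂ))⁻¹‖ * ‖WW p φD θD φ θ z t‖
          ≤ C1 * ‖WW p φD θD φ θ z t‖ :=
            mul_le_mul_of_nonneg_right (hC1 t (Ico_subset_Icc_self ht)) (norm_nonneg _)
        _ ≤ (max C1 C2) * max ‖DD φ θ z t‖ ‖WW p φD θD φ θ z t‖ :=
            mul_le_mul (le_max_left _ _) (le_max_right _ _) (norm_nonneg _) hM0
    · rw [norm_mul]
      calc ‖((q t : ℂ))‖ * ‖DD φ θ z t‖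
          ≤ C2 * ‖DD φ θ z t‖ :=
            mul_le_mul_of_nonneg_right (hC2 t (Ico_subset_Icc_self ht)) (norm_nonneg _)
        _ ≤ (max C1 C2) * max ‖DD φ θ z t‖ ‖WW p φD θD φ θ z t‖ :=
            mul_le_mul (le_max_right _ _) (le_max_left _ _) (norm_nonneg _) hM0
  have hGr := norm_le_gronwallBound_of_norm_deriv_right_le hγc hγ' hγ0 hbound x
    (right_mem_Icc.2 hx)
  have hzero : gronwallBound 0 (max C1 C2) 0 (x - 0) = 0 := by
    rw [gronwallBound_ε0]; simp
  rw [hzero] at hGr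
  have hDx : DD φ θ z x = 0 := by
    have h := norm_le_zero_iff.1 hGr
    simpa using congrArg Prod.fst h
  -- conclude
  have hIcomm : (∫ y in Ioi (0:ℝ), φ z y * θ 0 y) = II φ θ z := by
    rw [II]
    exact integral_congr_ae (Eventually.of_forall fun y => mul_comm _ _)
  simp only [quasiRes]
  rw [hTail, hIcomm, show (∫ y in (0:ℝ)..x, φ 0 y * φ z y) = GG φ z x from rfl]
  simp only [DD] at hDx
  linear_combination hDx


end SLLC
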